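/- In the free Lie algebra L, let P = [x,[y,[x,[x,y]]]] − 2·[y,[x,[x,[x,y]]]] − [y,[y,[y,[y,x]]]]. Then P ≠ 0 and [x, P] + [y, s(P)] = 0, where s(P) = P(−y,−x) is obtained by substituting −y for x and −x for y. -/

import Mathlib

noncomputable section

open scoped BigOperators

variable (K : Type) [Field K] [CharZero K]

/-- The free associative algebra `T = K⟨x,y⟩`, realized as the monoid algebra of the
free monoid on two generators. -/
abbrev T := MonoidAlgebra K (FreeMonoid (Fin 2))

/-- The word `v₁⋯vₙ` (a list of letters) as an element of `T`. -/
def word (l : List (Fin 2)) : T K := MonoidAlgebra.single (FreeMonoid.ofList l) 1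

/-- The generator `x`. -/
def X : T K := word K [0]

/-- The generator `y`. -/
def Y : T K := word K [1]

/-- Right-nested bracket `[v₁,[v₂,…,[vₙ₋₁,vₙ]…]]` of a word. -/
def brList : List (Fin 2) → T K
  | [] => 0
  | [v] => word K [v]
  | v :: rest => word K [v] * brList rest - brList rest * word K [v]

/-- The Dynkin map `γ : T → T`, sending a word `v₁⋯vₙ` to
`(1/n)[v₁,[v₂,…,[vₙ₋₁,vₙ]…]]` (and `1 ↦ 0`). -/
def dynkin : T K →ₗ[K] T K :=
  (Finsupp.linearCombination K fun w : FreeMonoid (Fin 2) =>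
    ((w.toList.length : K)⁻¹) • brList K w.toList) ∘ₗ
    (MonoidAlgebra.coeffLinearEquiv K).toLinearMap

attribute [local instance] LieRing.ofAssociativeRing

/-- The free Lie algebra `L` on `x, y`, as the Lie subalgebra of `T` generated by `x` and `y`. -/
def L : LieSubalgebra K (T K) := LieSubalgebra.lieSpan K (T K) {X K, Y K}

/-- The degree-`n` homogeneous component `T_n` of `T`, spanned by the words of length `n`. -/
def homog (n : ℕ) : Submodule K (T K) :=
  Submodule.span K { t | ∃ l : List (Fin 2), l.length = n ∧ t = word K l }

/-- The value `σ(i)` of a permutation of `{0,…,n-1}` on a natural number (junk value `0`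
outside the range). -/
def permVal {n : ℕ} (σ : Equiv.Perm (Fin n)) (i : ℕ) : ℕ :=
  if h : i < n then (σ ⟨i, h⟩ : ℕ) else 0

/-- The (0-indexed) descent set of a permutation: positions `i ∈ {0,…,n-2}` with
`σ(i) > σ(i+1)`. -/
def descSet {n : ℕ} (σ : Equiv.Perm (Fin n)) : Finset ℕ :=
  (Finset.range (n - 1)).filter fun i => permVal σ (i + 1) < permVal σ i

/-- The number of descents of a permutation. -/
def descNum {n : ℕ} (σ : Equiv.Perm (Fin n)) : ℕ := (descSet σ).card

/-- `DSet n k` is the set of permutations of `{0,…,n-1}` whose descent set is exactly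
the first `k` positions (this is `D_{1..k}` of the paper, in 0-indexed form). -/
def DSet (n k : ℕ) : Finset (Equiv.Perm (Fin n)) :=
  Finset.univ.filter fun σ => descSet σ = Finset.range k

/-- The Eulerian coefficient `c_σ = (-1)^{d(σ)} (binom (n-1) (d σ))⁻¹`. -/
def eulCoeff {n : ℕ} (σ : Equiv.Perm (Fin n)) : K :=
  (-1 : K) ^ descNum σ * ((Nat.choose (n - 1) (descNum σ) : K))⁻¹

/-- The degree-`n` Eulerian idempotent applied to the word `w₁⋯wₙ` given by
`v : Fin n → Fin 2`: `eₙ(w) = Σ_σ c_σ w^σ`. -/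
def eul (n : ℕ) (v : Fin n → Fin 2) : T K :=
  ∑ σ : Equiv.Perm (Fin n), eulCoeff K σ • word K (List.ofFn fun i => v (σ i))

/-- The `a`-part of an element of `T`: the linear map sending a word `a·w ↦ w` and
any word not starting with the letter `a` (or the empty word) to `0`.  For `p` with zero
constant term, `p = x·(letterPart 0 p) + y·(letterPart 1 p)`. -/
def letterPart (a : Fin 2) : T K →ₗ[K] T K :=
  (Finsupp.linearCombination K fun w : FreeMonoid (Fin 2) =>
    match w.toList with
    | [] => 0
    | b :: rest => if b = a then word K rest else 0) ∘ₗ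
    (MonoidAlgebra.coeffLinearEquiv K).toLinearMap

/-- The algebra endomorphism `s : T → T` with `s(x) = -y`, `s(y) = -x`. -/
def sMap : T K →ₐ[K] T K :=
  MonoidAlgebra.lift (R := K) (M := FreeMonoid (Fin 2)) (A := T K)
    (FreeMonoid.lift fun a : Fin 2 => if a = 0 then -(Y K) else -(X K))

/-!
Writing `P = vergneElement x y`, the identity `[x, P(x,y)] + [y, P(-y,-x)] = 0` is a
noncommutative polynomial identity of degree 6, valid for any two elements of any associative
ring; it transfers to `T` because `s` is a ring homomorphism with `s(x) = -y`, `s(y) = -x`.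
For `P ≠ 0`, note that `[a, b] = a` forces `[a, [a, b]] = 0` and `ad(b)⁴ a = a`, so
`P(a, b) = -a`; the matrix units `a = E₀₁`, `b = E₁₁` satisfy `[a, b] = a`, and evaluating
`x ↦ a`, `y ↦ b` shows `P(x, y) ≠ 0`.
-/

section LieRing

variable {L : Type*} [LieRing L]

def vergneElement (x y : L) : L :=
  ⁅x, ⁅y, ⁅x, ⁅x, y⁆⁆⁆⁆ - 2 • ⁅y, ⁅x, ⁅x, ⁅x, y⁆⁆⁆⁆ - ⁅y, ⁅y, ⁅y, ⁅y, x⁆⁆⁆⁆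

theorem vergneElement_of_lie_eq_self {a b : L} (h : ⁅a, b⁆ = a) : vergneElement a b = -a := by
  have hba : ⁅b, a⁆ = -a := by rw [← lie_skew, h]
  simp [vergneElement, h, hba]

end LieRing

section Ring

variable {A B : Type*} [Ring A] [Ring B]

theorem RingHomClass.map_lie {F : Type*} [FunLike F A B] [RingHomClass F A B] (f : F)
    (x y : A) : f ⁅x, y⁆ = ⁅f x, f y⁆ := by
  simp only [Ring.lie_def, map_sub, map_mul]

theorem map_vergneElement {F : Type*} [FunLike F A B] [RingHomClass F A B] (f : F) (x y : A) :
    f (vergneElement x y) = vergneElement (f x) (f y) := by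
  simp only [vergneElement, map_sub, map_nsmul, RingHomClass.map_lie]

theorem lie_vergneElement_add_lie_vergneElement_neg_neg (x y : A) :
    ⁅x, vergneElement x y⁆ + ⁅y, vergneElement (-y) (-x)⁆ = 0 := by
  simp only [vergneElement, Ring.lie_def]
  noncomm_ring

theorem Matrix.exists_ne_zero_lie_eq_self (R : Type*) [Ring R] [Nontrivial R] :
    ∃ a b : Matrix (Fin 2) (Fin 2) R, a ≠ 0 ∧ ⁅a, b⁆ = a := by
  refine ⟨Matrix.single 0 1 1, Matrix.single 1 1 1, fun h => ?_, ?_⟩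
  · simpa using congrFun (congrFun h 0) 1
  simp [Ring.lie_def, Matrix.single_mul_single_same, Matrix.single_mul_single_of_ne]

end Ring

def evalHom {A : Type*} [Ring A] [Algebra K A] (a b : A) : T K →ₐ[K] A :=
  MonoidAlgebra.lift (R := K) (M := FreeMonoid (Fin 2)) (A := A) (FreeMonoid.lift ![a, b])

omit [CharZero K] in
theorem evalHom_X {A : Type*} [Ring A] [Algebra K A] (a b : A) : evalHom K a b (X K) = a := by
  simp [evalHom, X, word, MonoidAlgebra.lift_single]

omit [CharZero K] in
theorem evalHom_Y {A : Type*} [Ring A] [Algebra K A] (a b : A) : evalHom K a b (Y K) = b := by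
  simp [evalHom, Y, word, MonoidAlgebra.lift_single]

omit [CharZero K] in
theorem vergneElement_X_Y_ne_zero : vergneElement (X K) (Y K) ≠ 0 := by
  obtain ⟨a, b, ha, hab⟩ := Matrix.exists_ne_zero_lie_eq_self K
  intro h
  have := congrArg (evalHom K a b) h
  rw [map_vergneElement, evalHom_X, evalHom_Y, vergneElement_of_lie_eq_self hab, map_zero,
    neg_eq_zero] at this
  exact ha this

omit [CharZero K] in
theorem sMap_X : sMap K (X K) = -Y K := by
  simp [sMap, X, word, MonoidAlgebra.lift_single]

omit [CharZero K] in
theorem sMap_Y : sMap K (Y K) = -X K := by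
  simp [sMap, Y, word, MonoidAlgebra.lift_single]

/-- **Vergne's example.**  The Lie element
`P = [x,[y,[x,[x,y]]]] - 2[y,[x,[x,[x,y]]]] - [y,[y,[y,[y,x]]]]` is nonzero and satisfies
`[x, P] + [y, P(-y,-x)] = 0`. -/
theorem stmt14 (P : T K)
    (hP : P = ⁅X K, ⁅Y K, ⁅X K, ⁅X K, Y K⁆⁆⁆⁆
        - (2 : K) • ⁅Y K, ⁅X K, ⁅X K, ⁅X K, Y K⁆⁆⁆⁆
        - ⁅Y K, ⁅Y K, ⁅Y K, ⁅Y K, X K⁆⁆⁆⁆) :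
    P ≠ 0 ∧ ⁅X K, P⁆ + ⁅Y K, sMap K P⁆ = 0 := by
  have hPv : P = vergneElement (X K) (Y K) := by rw [hP, vergneElement, two_smul, two_nsmul]
  subst hPv
  refine ⟨vergneElement_X_Y_ne_zero K, ?_⟩
  rw [map_vergneElement, sMap_X, sMap_Y]
  exact lie_vergneElement_add_lie_vergneElement_neg_neg _ _

end
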